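/- arXiv:1512.06354 — 2 statements merged into one kernel-verified Lean document; each statement's English description precedes it below -/
import Mathlib

section
/- Any algebra automorphism g of the Zorn octonion algebra O commutes with conjugation, and hence preserves the trace, the norm, and the associated bilinear form: t(ga) = t(a), n(ga) = n(a), and q(ga, gb) = q(a, b) for all a, b ∈ O, where q(a,b) = a·conj(b) + b·conj(a). -/
open Matrix

/-- The Zorn vector-matrix algebra: elements `(α, u; v, β)` with `α β : F`, `u v : F³`. -/
def Zorn (F : Type*) : Type _ := F × F × (Fin 3 → F) × (Fin 3 → F)

namespace Zorn

variable {F : Type*} [Field F]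

/-- Build a Zorn matrix from its four components. -/
def mk (a b : F) (u v : Fin 3 → F) : Zorn F := (a, b, u, v)

/-- The upper-left scalar entry `α`. -/
def al (x : Zorn F) : F := x.1
/-- The lower-right scalar entry `β`. -/
def be (x : Zorn F) : F := x.2.1
/-- The upper-right vector entry `u`. -/
def up (x : Zorn F) : Fin 3 → F := x.2.2.1
/-- The lower-left vector entry `v`. -/
def lo (x : Zorn F) : Fin 3 → F := x.2.2.2

instance : AddCommGroup (Zorn F) :=
  inferInstanceAs (AddCommGroup (F × F × (Fin 3 → F) × (Fin 3 → F)))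

instance : Module F (Zorn F) :=
  inferInstanceAs (Module F (F × F × (Fin 3 → F) × (Fin 3 → F)))

/-- Zorn vector-matrix multiplication. -/
instance : Mul (Zorn F) :=
  ⟨fun x y => mk (x.al * y.al + x.up ⬝ᵥ y.lo)
      (x.be * y.be + x.lo ⬝ᵥ y.up)
      (x.al • y.up + y.be • x.up - crossProduct x.lo y.lo)
      (y.al • x.lo + x.be • y.lo + crossProduct x.up y.up)⟩

instance : One (Zorn F) := ⟨mk 1 1 0 0⟩

/-- The standard conjugation (involution) of the Zorn algebra. -/
def conj (x : Zorn F) : Zorn F := mk x.be x.al (-x.up) (-x.lo)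

/-- The trace `t(a) = α + β` (the scalar such that `a + conj a = t a • 1`). -/
def t (x : Zorn F) : F := x.al + x.be

/-- The norm `n(a) = αβ - u·v` (the scalar such that `a * conj a = n a • 1`). -/
def n (x : Zorn F) : F := x.al * x.be - x.up ⬝ᵥ x.lo

/-- The idempotent `e₁`. -/
def e₁ : Zorn F := mk 1 0 0 0
/-- The idempotent `e₂`. -/
def e₂ : Zorn F := mk 0 1 0 0
/-- The basis element `u_i`. -/
def U (i : Fin 3) : Zorn F := mk 0 0 (Pi.single i 1) 0
/-- The basis element `v_i`. -/
def V (i : Fin 3) : Zorn F := mk 0 0 0 (Pi.single i 1)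

/-- An (algebra) automorphism of the Zorn algebra: a bijective `F`-linear,
multiplicative, unital self-map. -/
def IsAut (g : Zorn F → Zorn F) : Prop :=
  Function.Bijective g ∧ (∀ x y : Zorn F, g (x + y) = g x + g y) ∧
    (∀ (c : F) (x : Zorn F), g (c • x) = c • g x) ∧
    (∀ x y : Zorn F, g (x * y) = g x * g y) ∧ g 1 = 1

end Zorn

open Zorn

/-!
Every element of the Zorn algebra satisfies `x * x = t x • x - n x • 1`. Applying an automorphism
`g`, which fixes the scalars `F • 1`, gives `g a * g a = t a • g a - n a • 1`; when `a`, hence `g a`,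
is not a scalar, `1` and `g a` are linearly independent, so comparing with the identity for `g a`
yields `t (g a) = t a` and `n (g a) = n a`. Since `conj x = t x • 1 - x` and `q` is the polarization
of `n`, the remaining statements follow.
-/

namespace Zorn

@[ext]
lemma ext {F : Type*} {x y : Zorn F} (hal : x.al = y.al) (hbe : x.be = y.be) (hup : x.up = y.up)
    (hlo : x.lo = y.lo) : x = y :=
  Prod.ext hal (Prod.ext hbe (Prod.ext hup hlo))

variable {F : Type*} [Field F]

@[simp] lemma al_mul (x y : Zorn F) : (x * y).al = x.al * y.al + x.up ⬝ᵥ y.lo := rfl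
@[simp] lemma be_mul (x y : Zorn F) : (x * y).be = x.be * y.be + x.lo ⬝ᵥ y.up := rfl
@[simp] lemma up_mul (x y : Zorn F) :
    (x * y).up = x.al • y.up + y.be • x.up - crossProduct x.lo y.lo := rfl
@[simp] lemma lo_mul (x y : Zorn F) :
    (x * y).lo = y.al • x.lo + x.be • y.lo + crossProduct x.up y.up := rfl

@[simp] lemma al_add (x y : Zorn F) : (x + y).al = x.al + y.al := rfl
@[simp] lemma be_add (x y : Zorn F) : (x + y).be = x.be + y.be := rfl
@[simp] lemma up_add (x y : Zorn F) : (x + y).up = x.up + y.up := rfl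
@[simp] lemma lo_add (x y : Zorn F) : (x + y).lo = x.lo + y.lo := rfl

@[simp] lemma al_sub (x y : Zorn F) : (x - y).al = x.al - y.al := rfl
@[simp] lemma be_sub (x y : Zorn F) : (x - y).be = x.be - y.be := rfl
@[simp] lemma up_sub (x y : Zorn F) : (x - y).up = x.up - y.up := rfl
@[simp] lemma lo_sub (x y : Zorn F) : (x - y).lo = x.lo - y.lo := rfl

@[simp] lemma al_smul (c : F) (x : Zorn F) : (c • x).al = c * x.al := rfl
@[simp] lemma be_smul (c : F) (x : Zorn F) : (c • x).be = c * x.be := rfl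
@[simp] lemma up_smul (c : F) (x : Zorn F) : (c • x).up = c • x.up := rfl
@[simp] lemma lo_smul (c : F) (x : Zorn F) : (c • x).lo = c • x.lo := rfl

@[simp] lemma al_one : (1 : Zorn F).al = 1 := rfl
@[simp] lemma be_one : (1 : Zorn F).be = 1 := rfl
@[simp] lemma up_one : (1 : Zorn F).up = 0 := rfl
@[simp] lemma lo_one : (1 : Zorn F).lo = 0 := rfl

@[simp] lemma al_conj (x : Zorn F) : (conj x).al = x.be := rfl
@[simp] lemma be_conj (x : Zorn F) : (conj x).be = x.al := rfl
@[simp] lemma up_conj (x : Zorn F) : (conj x).up = -x.up := rfl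
@[simp] lemma lo_conj (x : Zorn F) : (conj x).lo = -x.lo := rfl

lemma conj_eq_t_smul_one_sub (x : Zorn F) : conj x = t x • 1 - x := by
  ext <;> simp [t]

lemma mul_self_eq (x : Zorn F) : x * x = t x • x - n x • 1 := by
  ext : 1 <;> simp [t, n, cross_self, dotProduct_comm x.lo x.up, add_smul]
  ring

lemma mul_conj_add_mul_conj (x y : Zorn F) :
    x * conj y + y * conj x = (n (x + y) - n x - n y) • 1 := by
  ext : 1 <;> simp only [n, al_add, be_add, up_add, lo_add, al_mul, be_mul, up_mul, lo_mul,
    al_conj, be_conj, up_conj, lo_conj, al_smul, be_smul, up_smul, lo_smul, al_one, be_one,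
    up_one, lo_one, dotProduct_add, add_dotProduct, dotProduct_neg, smul_neg, map_neg]
  · ring
  · rw [dotProduct_comm x.lo, dotProduct_comm y.lo]
    ring
  · linear_combination (norm := module) cross_anticomm' x.lo y.lo
  · linear_combination (norm := module) -cross_anticomm' x.up y.up

lemma linearIndependent_one_of_forall_ne {x : Zorn F} (hx : ∀ c : F, c • (1 : Zorn F) ≠ x) :
    LinearIndependent F ![1, x] :=
  (LinearIndependent.pair_iff' fun h => one_ne_zero (congrArg al h)).mpr hx

variable {g : Zorn F → Zorn F}

lemma IsAut.map_add (hg : IsAut g) (x y : Zorn F) : g (x + y) = g x + g y := hg.2.1 x y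

lemma IsAut.map_sub (hg : IsAut g) (x y : Zorn F) : g (x - y) = g x - g y :=
  (AddMonoidHom.mk' g hg.2.1).map_sub x y

lemma IsAut.map_mul (hg : IsAut g) (x y : Zorn F) : g (x * y) = g x * g y := hg.2.2.2.1 x y

lemma IsAut.map_smul_one (hg : IsAut g) (c : F) : g (c • 1) = c • 1 := by
  rw [hg.2.2.1, hg.2.2.2.2]

lemma IsAut.map_mul_self (hg : IsAut g) (a : Zorn F) :
    g a * g a = t a • g a - n a • 1 := by
  rw [← hg.map_mul, mul_self_eq, hg.map_sub, hg.2.2.1, hg.map_smul_one]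

lemma IsAut.t_map_and_n_map (hg : IsAut g) (a : Zorn F) : t (g a) = t a ∧ n (g a) = n a := by
  by_cases hscalar : ∃ c : F, c • (1 : Zorn F) = a
  · obtain ⟨c, rfl⟩ := hscalar
    rw [hg.map_smul_one]
    exact ⟨rfl, rfl⟩
  push Not at hscalar
  have hga : ∀ c : F, c • (1 : Zorn F) ≠ g a := fun c h =>
    hscalar c (hg.1.1 (by rw [hg.map_smul_one, h]))
  have h : (-n (g a)) • (1 : Zorn F) + t (g a) • g a = (-n a) • 1 + t a • g a := by
    linear_combination (norm := module) (mul_self_eq (g a)).symm.trans (hg.map_mul_self a)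
  obtain ⟨hn, ht⟩ := (linearIndependent_one_of_forall_ne hga).eq_of_pair h
  exact ⟨ht, neg_inj.mp hn⟩

lemma IsAut.map_conj (hg : IsAut g) (a : Zorn F) : g (conj a) = conj (g a) := by
  rw [conj_eq_t_smul_one_sub, hg.map_sub, hg.map_smul_one, conj_eq_t_smul_one_sub,
    (hg.t_map_and_n_map a).1]

end Zorn

/-- Every algebra automorphism of the Zorn octonion algebra commutes with
conjugation, hence preserves the trace, the norm and the bilinear form
`q(a,b) = a·conj(b) + b·conj(a)`. -/
theorem zorn_aut_preserves_forms {F : Type*} [Field F]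
    (g : Zorn F → Zorn F) (hg : Zorn.IsAut g) :
    (∀ a : Zorn F, g (Zorn.conj a) = Zorn.conj (g a)) ∧
    (∀ a : Zorn F, Zorn.t (g a) = Zorn.t a) ∧
    (∀ a : Zorn F, Zorn.n (g a) = Zorn.n a) ∧
    (∀ a b : Zorn F,
      g a * Zorn.conj (g b) + g b * Zorn.conj (g a)
        = a * Zorn.conj b + b * Zorn.conj a) := by
  refine ⟨hg.map_conj, fun a => (hg.t_map_and_n_map a).1, fun a => (hg.t_map_and_n_map a).2,
    fun a b => ?_⟩
  calc g a * conj (g b) + g b * conj (g a)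
      = g (a * conj b + b * conj a) := by
        rw [hg.map_add, hg.map_mul, hg.map_mul, hg.map_conj, hg.map_conj]
    _ = a * conj b + b * conj a := by
        rw [mul_conj_add_mul_conj, hg.map_smul_one]
end

section
/- Over a field F of characteristic ≠ 2, the four multilinear invariants q(z₁,z₂)q(z₃,z₄), q(z₁,z₃)q(z₂,z₄), q(z₁,z₄)q(z₂,z₃), and Q(z₁,z₂,z₃,z₄), regarded as multilinear maps O⁴ → F, are linearly independent. (In particular, the substitution z₁ ↦ e₁, z₂ ↦ v₁, z₃ ↦ v₂, z₄ ↦ v₃ kills the first three and sends Q to −1/2.) -/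
open Matrix

open Zorn

/-- `M(z₁,z₂) = ½(z₁z₂ − z₂z₁) + t(z₁)z₂ − t(z₂)z₁`. -/
def M {F : Type*} [Field F] (z₁ z₂ : Zorn F) : Zorn F :=
  (2 : F)⁻¹ • (z₁ * z₂ - z₂ * z₁) + Zorn.t z₁ • z₂ - Zorn.t z₂ • z₁

/-- `F(z₁,z₂,z₃,z₄) = t(M(z₁,z₂)·M(z₃,z₄))`. -/
def Fq {F : Type*} [Field F] (z₁ z₂ z₃ z₄ : Zorn F) : F :=
  Zorn.t (M z₁ z₂ * M z₃ z₄)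

/-- `Q`, the complete skew symmetrization of `F(z₁,z₂,z₃,z₄)`. -/
def Q {F : Type*} [Field F] (z₁ z₂ z₃ z₄ : Zorn F) : F :=
  (6 : F)⁻¹ * (Fq z₁ z₂ z₃ z₄ - Fq z₃ z₂ z₁ z₄ - Fq z₄ z₂ z₃ z₁ - Fq z₁ z₄ z₃ z₂
    - Fq z₁ z₃ z₂ z₄ - Fq z₃ z₄ z₂ z₁)

/-- The scalar bilinear form of the norm: `q(a,b) = αβ' + α'β − u·v' − u'·v`,
i.e. the scalar such that `a·conj(b) + b·conj(a) = q(a,b)·1`. -/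
def qf {F : Type*} [Field F] (a b : Zorn F) : F :=
  a.al * b.be + b.al * a.be - a.up ⬝ᵥ b.lo - b.up ⬝ᵥ a.lo

/-!
Evaluate the relation at tuples of basis vectors. At `(e₁, v₁, v₂, v₃)` every pairing `q(zᵢ, zⱼ)`
vanishes, while `M(e₁, v) = ½ v`, `M(v, e₁) = -½ v` and `M(v, w) = w × v` (in the `u`-slot) make
each of the six signed terms of `6 Q` equal to `-½ v₁ · (v₂ × v₃) = -½`, so `Q(e₁, v₁, v₂, v₃) = -½`
and the coefficient of `Q` vanishes. Since `q(e₁, e₂) = 1`,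
`q(u₁, v₁) = -1` and all other pairings among `e₁, e₂, u₁, v₁` vanish, the tuples
`(e₁, e₂, u₁, v₁)`, `(e₁, u₁, e₂, v₁)` and `(e₁, u₁, v₁, e₂)` then isolate the other three
coefficients.
-/

namespace Zorn

variable {F : Type*} [Field F]

@[simp]
lemma mk_mul_mk (a b a' b' : F) (u v u' v' : Fin 3 → F) :
    mk a b u v * mk a' b' u' v'
      = mk (a * a' + u ⬝ᵥ v') (b * b' + v ⬝ᵥ u')
        (a • u' + b' • u - v ⨯₃ v') (a' • v + b • v' + u ⨯₃ u') := rfl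

@[simp]
lemma smul_mk (c a b : F) (u v : Fin 3 → F) :
    c • mk a b u v = mk (c * a) (c * b) (c • u) (c • v) := rfl

@[simp]
lemma mk_add_mk (a b a' b' : F) (u v u' v' : Fin 3 → F) :
    mk a b u v + mk a' b' u' v' = mk (a + a') (b + b') (u + u') (v + v') := rfl

@[simp]
lemma mk_sub_mk (a b a' b' : F) (u v u' v' : Fin 3 → F) :
    mk a b u v - mk a' b' u' v' = mk (a - a') (b - b') (u - u') (v - v') := rfl

@[simp]
lemma t_mk (a b : F) (u v : Fin 3 → F) : t (mk a b u v) = a + b := rfl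

lemma t_mk_mul_mk (a b a' b' : F) (u v u' v' : Fin 3 → F) :
    t (mk a b u v * mk a' b' u' v') = a * a' + b * b' + u ⬝ᵥ v' + v ⬝ᵥ u' := by
  simp only [mk_mul_mk, t_mk]; ring

lemma M_e₁_lower (h2 : (2 : F) ≠ 0) (v : Fin 3 → F) :
    M e₁ (mk 0 0 0 v) = mk 0 0 0 ((2 : F)⁻¹ • v) := by
  simp only [M, e₁, mk_mul_mk, smul_mk, mk_sub_mk, mk_add_mk, t_mk]
  congr 1 <;> simp
  ext i
  simp only [Pi.add_apply, Pi.neg_apply, Pi.smul_apply, smul_eq_mul]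
  field_simp; ring

lemma M_lower_e₁ (h2 : (2 : F) ≠ 0) (v : Fin 3 → F) :
    M (mk 0 0 0 v) e₁ = mk 0 0 0 (-(2 : F)⁻¹ • v) := by
  simp only [M, e₁, mk_mul_mk, smul_mk, mk_sub_mk, mk_add_mk, t_mk]
  congr 1 <;> simp
  ext i
  simp only [Pi.sub_apply, Pi.neg_apply, Pi.smul_apply, smul_eq_mul]
  field_simp; ring

lemma M_lower_lower (h2 : (2 : F) ≠ 0) (v w : Fin 3 → F) :
    M (mk 0 0 0 v) (mk 0 0 0 w) = mk 0 0 (w ⨯₃ v) 0 := by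
  simp only [M, mk_mul_mk, smul_mk, mk_sub_mk, mk_add_mk, t_mk]
  congr 1 <;> simp
  rw [← cross_anticomm w v, sub_neg_eq_add, ← two_smul F, smul_smul, inv_mul_cancel₀ h2, one_smul]

@[simp]
lemma qf_mk (a b a' b' : F) (u v u' v' : Fin 3 → F) :
    qf (mk a b u v) (mk a' b' u' v') = a * b' + a' * b - u ⬝ᵥ v' - u' ⬝ᵥ v := rfl

lemma Q_e₁_lower (h2 : (2 : F) ≠ 0) (h3 : (3 : F) ≠ 0) (u v w : Fin 3 → F) :
    Q e₁ (mk 0 0 0 u) (mk 0 0 0 v) (mk 0 0 0 w) = -(2 : F)⁻¹ * u ⬝ᵥ v ⨯₃ w := by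
  simp only [Q, Fq, M_e₁_lower h2, M_lower_e₁ h2, M_lower_lower h2, t_mk_mul_mk, mul_zero,
    zero_add, add_zero, dotProduct_zero, dotProduct_smul, smul_dotProduct]
  have h6 : (6 : F) ≠ 0 := by
    rw [show (6 : F) = 2 * 3 by norm_num]; exact mul_ne_zero h2 h3
  simp only [dotProduct, cross_apply, Fin.sum_univ_three, cons_val_zero, cons_val_one, cons_val,
    smul_eq_mul]
  field_simp
  ring

lemma Q_e₁_V_V_V (h2 : (2 : F) ≠ 0) (h3 : (3 : F) ≠ 0) :
    Q e₁ (V 0) (V 1) (V 2) = -(2 : F)⁻¹ := by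
  rw [V, V, V, Q_e₁_lower h2 h3]
  simp [cross_apply, dotProduct, Fin.sum_univ_three]

end Zorn

/-- The four multilinear invariants `q(12)q(34)`, `q(13)q(24)`, `q(14)q(23)`
and `Q(1234)` are linearly independent as multilinear maps `O⁴ → F`. -/
theorem zorn_invariants_linear_independent {F : Type*} [Field F]
    (h2 : (2 : F) ≠ 0) (h3 : (3 : F) ≠ 0) (a b c d : F)
    (h : ∀ z₁ z₂ z₃ z₄ : Zorn F,
      a * (qf z₁ z₂ * qf z₃ z₄) + b * (qf z₁ z₃ * qf z₂ z₄)
        + c * (qf z₁ z₄ * qf z₂ z₃) + d * Q z₁ z₂ z₃ z₄ = 0) :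
    a = 0 ∧ b = 0 ∧ c = 0 ∧ d = 0 := by
  have hd : d = 0 := by
    have key := h e₁ (V 0) (V 1) (V 2)
    rw [Q_e₁_V_V_V h2 h3] at key
    simpa [e₁, V, h2] using key
  subst hd
  refine ⟨?_, ?_, ?_, rfl⟩
  · simpa [e₁, e₂, U, V] using h e₁ e₂ (U 0) (V 0)
  · simpa [e₁, e₂, U, V] using h e₁ (U 0) e₂ (V 0)
  · simpa [e₁, e₂, U, V] using h e₁ (U 0) (V 0) e₂
end
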